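/- Let r ≥ 3 and let f : ℝ^d → ℝ be convex and differentiable, attaining its minimum f* at x*. Let X : (0, ∞) → ℝ^d be twice continuously differentiable and satisfy Ẍ_t + (r/t) Ẋ_t + ∇f(X_t) = 0. Then the energy functional E_t = (t²/(r−1)²)(f(X_t) − f*) + (1/2)‖x* − X_t − (t/(r−1)) Ẋ_t‖² is nonincreasing in t; consequently, for all t ≥ t_0 > 0, f(X_t) − f* ≤ (r−1)² E_{t_0} / t². -/

import Mathlib

open scoped RealInnerProductSpace
open Real Set

noncomputable section

/-!
Along a trajectory, the ODE turns the derivative of `v t = x* - X t - (t / (r - 1)) • Ẋ t` into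
`(t / (r - 1)) • ∇f (X t)`, so the energy has derivative
`2t / (r - 1)² (f (X t) - f*) + t / (r - 1) ⟪∇f (X t), x* - X t⟫`.
First-order convexity bounds the inner product by `-(f (X t) - f*)`, which leaves
`t (3 - r) / (r - 1)² (f (X t) - f*) ≤ 0` for `r ≥ 3`. The rate follows from `E t ≤ E t₀` after
dropping the kinetic term of `E t`.
-/

theorem ConvexOn.add_fderiv_sub_le {E : Type*} [NormedAddCommGroup E] [NormedSpace ℝ E]
    {s : Set E} {f : E → ℝ} {f' : E →L[ℝ] ℝ} {x y : E} (hf : ConvexOn ℝ s f)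
    (hx : x ∈ s) (hy : y ∈ s) (hf' : HasFDerivAt f f' x) :
    f x + f' (y - x) ≤ f y := by
  set γ : ℝ →ᵃ[ℝ] E := AffineMap.lineMap x y
  have hγ : HasDerivAt (f ∘ γ) (f' (y - x)) 0 :=
    HasFDerivAt.comp_hasDerivAt (0 : ℝ) (by simpa [γ] using hf') AffineMap.hasDerivAt_lineMap
  have hslope : slope (f ∘ γ) 0 1 = f y - f x := by simp [slope, γ]
  have := (hf.comp_affineMap γ).le_slope_of_hasDerivAt (by simpa [γ] using hx)
    (by simpa [γ] using hy) one_pos hγ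
  linarith

theorem ConvexOn.add_inner_gradient_sub_le {E : Type*} [NormedAddCommGroup E]
    [InnerProductSpace ℝ E] [CompleteSpace E] {s : Set E} {f : E → ℝ} {x y : E}
    (hf : ConvexOn ℝ s f) (hx : x ∈ s) (hy : y ∈ s) (hfx : DifferentiableAt ℝ f x) :
    f x + ⟪gradient f x, y - x⟫ ≤ f y := by
  simpa using hf.add_fderiv_sub_le hx hy (hasGradientAt_iff_hasFDerivAt.mp hfx.hasGradientAt)

section NesterovODE

variable {E : Type*} [NormedAddCommGroup E] [InnerProductSpace ℝ E]
  {f : E → ℝ} {xstar : E} {r t : ℝ} {X X' X'' : ℝ → E}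

def nesterovEnergy (f : E → ℝ) (xstar : E) (r : ℝ) (X X' : ℝ → E) (t : ℝ) : ℝ :=
  t ^ 2 / (r - 1) ^ 2 * (f (X t) - f xstar) + 1 / 2 * ‖xstar - X t - (t / (r - 1)) • X' t‖ ^ 2

theorem sub_le_mul_nesterovEnergy_div (hr : r ≠ 1) (ht : 0 < t) :
    f (X t) - f xstar ≤ (r - 1) ^ 2 * nesterovEnergy f xstar r X X' t / t ^ 2 := by
  have hr' : r - 1 ≠ 0 := sub_ne_zero.mpr hr
  have hpot : t ^ 2 / (r - 1) ^ 2 * (f (X t) - f xstar) ≤ nesterovEnergy f xstar r X X' t :=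
    le_add_of_nonneg_right (by positivity)
  rw [le_div_iff₀ (by positivity)]
  calc (f (X t) - f xstar) * t ^ 2
      = (r - 1) ^ 2 * (t ^ 2 / (r - 1) ^ 2 * (f (X t) - f xstar)) := by field_simp
    _ ≤ (r - 1) ^ 2 * nesterovEnergy f xstar r X X' t := by gcongr

variable [CompleteSpace E]

theorem hasDerivAt_sub_sub_smul_of_nesterovODE (hr : r ≠ 1) (ht : t ≠ 0)
    (hX : HasDerivAt X (X' t) t) (hX' : HasDerivAt X' (X'' t) t)
    (heq : X'' t + (r / t) • X' t + gradient f (X t) = 0) :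
    HasDerivAt (fun s ↦ xstar - X s - (s / (r - 1)) • X' s)
      ((t / (r - 1)) • gradient f (X t)) t := by
  have hr' : r - 1 ≠ 0 := sub_ne_zero.mpr hr
  have hX'' : X'' t = -(r / t) • X' t - gradient f (X t) := by
    rw [← sub_eq_zero, ← heq]; module
  refine (((hasDerivAt_const t xstar).sub hX).sub
    (((hasDerivAt_id' t).div_const (r - 1)).smul hX')).congr_deriv ?_
  rw [hX'']
  match_scalars
  · field_simp
    ring
  · field_simp

theorem hasDerivAt_nesterovEnergy (hr : r ≠ 1) (ht : t ≠ 0) (hf : DifferentiableAt ℝ f (X t))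
    (hX : HasDerivAt X (X' t) t) (hX' : HasDerivAt X' (X'' t) t)
    (heq : X'' t + (r / t) • X' t + gradient f (X t) = 0) :
    HasDerivAt (nesterovEnergy f xstar r X X')
      (2 * t / (r - 1) ^ 2 * (f (X t) - f xstar) +
        t / (r - 1) * ⟪gradient f (X t), xstar - X t⟫) t := by
  have hr' : r - 1 ≠ 0 := sub_ne_zero.mpr hr
  have hfX : HasDerivAt (f ∘ X) ⟪gradient f (X t), X' t⟫ t := by
    have := (hasGradientAt_iff_hasFDerivAt.mp hf.hasGradientAt).comp_hasDerivAt t hX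
    rwa [InnerProductSpace.toDual_apply_apply] at this
  have hpot := ((hasDerivAt_pow 2 t).div_const ((r - 1) ^ 2)).mul (hfX.sub_const (f xstar))
  have hkin := ((hasDerivAt_sub_sub_smul_of_nesterovODE (xstar := xstar) hr ht hX hX'
    heq).norm_sq).const_mul (1 / 2 : ℝ)
  refine (hpot.add hkin).congr_deriv ?_
  simp only [inner_sub_left, inner_sub_right, real_inner_smul_left, real_inner_smul_right,
    real_inner_comm (X' t), real_inner_comm (X t), real_inner_comm xstar, Function.comp_apply]
  field_simp
  ring

theorem antitoneOn_nesterovEnergy (hr : 3 ≤ r) (hconv : ConvexOn ℝ univ f)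
    (hf : Differentiable ℝ f) (hmin : ∀ x, f xstar ≤ f x)
    (hX : ∀ t ∈ Ioi (0 : ℝ), HasDerivAt X (X' t) t)
    (hX' : ∀ t ∈ Ioi (0 : ℝ), HasDerivAt X' (X'' t) t)
    (heq : ∀ t ∈ Ioi (0 : ℝ), X'' t + (r / t) • X' t + gradient f (X t) = 0) :
    AntitoneOn (nesterovEnergy f xstar r X X') (Ioi 0) := by
  have hr1 : r ≠ 1 := by linarith
  have hderiv (t : ℝ) (ht : t ∈ Ioi 0) := hasDerivAt_nesterovEnergy (xstar := xstar) hr1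
    ht.ne' (hf (X t)) (hX t ht) (hX' t ht) (heq t ht)
  refine antitoneOn_of_hasDerivWithinAt_nonpos (convex_Ioi 0)
    (fun t ht ↦ (hderiv t ht).continuousAt.continuousWithinAt)
    (fun t ht ↦ (hderiv t (interior_subset ht)).hasDerivWithinAt) fun t ht ↦ ?_
  rw [interior_Ioi, mem_Ioi] at ht
  have hgap : 0 ≤ f (X t) - f xstar := sub_nonneg.mpr (hmin (X t))
  have hinner : ⟪gradient f (X t), xstar - X t⟫ ≤ -(f (X t) - f xstar) := by
    linarith [hconv.add_inner_gradient_sub_le (mem_univ (X t)) (mem_univ xstar) (hf (X t))]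
  calc 2 * t / (r - 1) ^ 2 * (f (X t) - f xstar) + t / (r - 1) * ⟪gradient f (X t), xstar - X t⟫
      ≤ 2 * t / (r - 1) ^ 2 * (f (X t) - f xstar) + t / (r - 1) * -(f (X t) - f xstar) := by
        gcongr
        exact div_nonneg ht.le (by linarith)
    _ = t * (3 - r) / (r - 1) ^ 2 * (f (X t) - f xstar) := by
        field_simp
        ring
    _ ≤ 0 := by
        apply mul_nonpos_of_nonpos_of_nonneg _ hgap
        apply div_nonpos_of_nonpos_of_nonneg _ (sq_nonneg _)
        nlinarith

end NesterovODE

theorem su_boyd_candes_energy_rate_general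
    (d : ℕ) (r : ℝ) (hr : 3 ≤ r)
    (f : EuclideanSpace ℝ (Fin d) → ℝ)
    (hconv : ConvexOn ℝ Set.univ f) (hf : Differentiable ℝ f)
    (xstar : EuclideanSpace ℝ (Fin d)) (hmin : ∀ x, f xstar ≤ f x)
    (X X' X'' : ℝ → EuclideanSpace ℝ (Fin d))
    (hX : ∀ t ∈ Set.Ioi (0 : ℝ), HasDerivAt X (X' t) t)
    (hX' : ∀ t ∈ Set.Ioi (0 : ℝ), HasDerivAt X' (X'' t) t)
    (heq : ∀ t ∈ Set.Ioi (0 : ℝ), X'' t + (r / t) • X' t + gradient f (X t) = 0) :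
    AntitoneOn
      (fun t : ℝ => (t ^ 2 / (r - 1) ^ 2) * (f (X t) - f xstar) +
        (1 / 2) * ‖xstar - X t - (t / (r - 1)) • X' t‖ ^ 2)
      (Set.Ioi 0) ∧
    ∀ t0 t : ℝ, 0 < t0 → t0 ≤ t →
      f (X t) - f xstar ≤
        (r - 1) ^ 2 *
          ((t0 ^ 2 / (r - 1) ^ 2) * (f (X t0) - f xstar) +
            (1 / 2) * ‖xstar - X t0 - (t0 / (r - 1)) • X' t0‖ ^ 2) / t ^ 2 := by
  have hanti : AntitoneOn (nesterovEnergy f xstar r X X') (Ioi 0) :=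
    antitoneOn_nesterovEnergy hr hconv hf hmin hX hX' heq
  refine ⟨hanti, fun t0 t ht0 htt ↦ ?_⟩
  have ht : 0 < t := ht0.trans_le htt
  calc f (X t) - f xstar ≤ (r - 1) ^ 2 * nesterovEnergy f xstar r X X' t / t ^ 2 :=
        sub_le_mul_nesterovEnergy_div (by linarith) ht
    _ ≤ (r - 1) ^ 2 * nesterovEnergy f xstar r X X' t0 / t ^ 2 := by
        gcongr
        exact hanti ht0 ht htt

theorem su_boyd_candes_energy_rate
    (d : ℕ) (r : ℝ) (hr : 3 ≤ r)
    (f : EuclideanSpace ℝ (Fin d) → ℝ)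
    (hconv : ConvexOn ℝ Set.univ f) (hf : Differentiable ℝ f)
    (xstar : EuclideanSpace ℝ (Fin d)) (hmin : ∀ x, f xstar ≤ f x)
    (X X' X'' : ℝ → EuclideanSpace ℝ (Fin d))
    (hX : ∀ t ∈ Set.Ioi (0 : ℝ), HasDerivAt X (X' t) t)
    (hX' : ∀ t ∈ Set.Ioi (0 : ℝ), HasDerivAt X' (X'' t) t)
    (hX''cont : ContinuousOn X'' (Set.Ioi 0))
    (heq : ∀ t ∈ Set.Ioi (0 : ℝ), X'' t + (r / t) • X' t + gradient f (X t) = 0) :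
    AntitoneOn
      (fun t : ℝ => (t ^ 2 / (r - 1) ^ 2) * (f (X t) - f xstar) +
        (1 / 2) * ‖xstar - X t - (t / (r - 1)) • X' t‖ ^ 2)
      (Set.Ioi 0) ∧
    ∀ t0 t : ℝ, 0 < t0 → t0 ≤ t →
      f (X t) - f xstar ≤
        (r - 1) ^ 2 *
          ((t0 ^ 2 / (r - 1) ^ 2) * (f (X t0) - f xstar) +
            (1 / 2) * ‖xstar - X t0 - (t0 / (r - 1)) • X' t0‖ ^ 2) / t ^ 2 :=
  su_boyd_candes_energy_rate_general d r hr f hconv hf xstar hmin X X' X'' hX hX' heq
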